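/- arXiv:2101.12311 — 3 statements merged into one kernel-verified Lean document; each statement's English description precedes it below -/
import Mathlib

section
/- Let B⁰, B¹, B², B³ ∈ Λ²V be 2-forms and let e⁰ ∈ V be arbitrary. Then the following are equivalent: (a) B^I = 0 for every I ∈ {0,1,2,3}; (b) e^I∧B^J − e^J∧B^I = 0 in Λ³V for all I, J ∈ {0,1,2,3}, and e^i∧B^j + e^j∧B^i = 0 for all i, j ∈ {1,2,3}. (This is the paper's Proposition: the constraints 𝖣^{(ij)} = 0 and e^{[I}∧De^{J]} = 0 are jointly equivalent to De^I = 0, with B^I playing the role of the torsion 2-forms De^I.) -/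
/-!
In dimension three a 2-form `β` is determined by the 3-forms `eⁱ ∧ β`: writing `β` in the basis
`⋆eᵏ` of `Λ²V`, one has `eⁱ ∧ ⋆eᵏ = δⁱₖ w`, so `eⁱ ∧ β = 0` for all `i` forces `β = 0`.
For spatial indices the antisymmetric and the symmetric conditions together give
`eⁱ ∧ Bʲ = 0`, hence `Bʲ = 0`; the condition for `(i, 0)` then reduces to `eⁱ ∧ B⁰ = 0`,
hence `B⁰ = 0`.
-/

open ExteriorAlgebra

theorem eq_zero_of_sub_eq_zero_of_add_eq_zero {K A : Type*} [DivisionRing K] [CharZero K]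
    [AddCommGroup A] [Module K A] {x y : A} (h₁ : x - y = 0) (h₂ : x + y = 0) : x = 0 := by
  rw [← sub_eq_zero.mp h₁, ← two_smul K] at h₂
  exact (smul_eq_zero.mp h₂).resolve_left two_ne_zero

namespace ExteriorAlgebra

variable {R M : Type*} [CommRing R] [AddCommGroup M] [Module R M]

theorem ι_mul_ι_anticomm (x y : M) : ι R y * ι R x = -(ι R x * ι R y) :=
  eq_neg_of_add_eq_zero_left (ι_add_mul_swap y x)

theorem mul_ι_mul_ι_anticomm (a : ExteriorAlgebra R M) (x y : M) :
    a * ι R y * ι R x = -(a * ι R x * ι R y) := by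
  rw [mul_assoc, ι_mul_ι_anticomm, mul_neg, mul_assoc]

theorem mul_ι_mul_ι_self (a : ExteriorAlgebra R M) (x : M) : a * ι R x * ι R x = 0 := by
  rw [mul_assoc, ι_sq_zero, mul_zero]

theorem ι_mul_ι_mul_ι_self (x y : M) : ι R x * ι R y * ι R x = 0 := by
  rw [ι_mul_ι_anticomm y x, neg_mul, mul_assoc, ι_sq_zero, mul_zero, neg_zero]

theorem ιMulti_fin_three (v : Fin 3 → M) :
    ιMulti R 3 v = ι R (v 0) * ι R (v 1) * ι R (v 2) := by
  simp [ιMulti_apply, mul_assoc, Matrix.vecTail]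

/-- The determinant of `b`, extended by zero to the other degrees, is a linear form on the
exterior algebra taking the value `1` on `ιMulti R n b`. -/
theorem smul_ιMulti_basis_eq_zero_iff {n : ℕ} (b : Module.Basis (Fin n) R M) {c : R} :
    c • ιMulti R n b = 0 ↔ c = 0 := by
  refine ⟨fun h => ?_, fun h => by rw [h, zero_smul]⟩
  have := congrArg (liftAlternating (R := R) (Function.update 0 n b.det)) h
  simpa [liftAlternating_apply_ιMulti, Module.Basis.det_self] using this

variable (b : Module.Basis (Fin 3) R M)

/-- The Hodge duals `⋆eᵏ = ½ εₖᵢⱼ eⁱ ∧ eʲ` of the basis vectors, indexed by `Fin 3 = {0, 1, 2}`. -/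
noncomputable def hodgeDualTwoForm : Fin 3 → ExteriorAlgebra R M :=
  ![ι R (b 1) * ι R (b 2), ι R (b 2) * ι R (b 0), ι R (b 0) * ι R (b 1)]

theorem ι_mul_hodgeDualTwoForm (i k : Fin 3) :
    ι R (b i) * hodgeDualTwoForm b k = if i = k then ιMulti R 3 b else 0 := by
  have s10 := ι_mul_ι_anticomm (R := R) (b 0) (b 1)
  have s20 := ι_mul_ι_anticomm (R := R) (b 0) (b 2)
  have s21 := mul_ι_mul_ι_anticomm (ι R (b 0)) (b 1) (b 2)
  rw [ιMulti_fin_three]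
  fin_cases i <;> fin_cases k <;>
    simp [hodgeDualTwoForm, ← mul_assoc, s10, s20, s21, mul_ι_mul_ι_self, ι_mul_ι_mul_ι_self]

theorem ι_mul_ι_mem_span_hodgeDualTwoForm (i j : Fin 3) :
    ι R (b i) * ι R (b j) ∈ Submodule.span R (Set.range (hodgeDualTwoForm b)) := by
  have s10 := ι_mul_ι_anticomm (R := R) (b 0) (b 1)
  have s02 := ι_mul_ι_anticomm (R := R) (b 2) (b 0)
  have s21 := ι_mul_ι_anticomm (R := R) (b 1) (b 2)
  have h0 : ι R (b 1) * ι R (b 2) ∈ Submodule.span R (Set.range (hodgeDualTwoForm b)) :=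
    Submodule.subset_span ⟨0, rfl⟩
  have h1 : ι R (b 2) * ι R (b 0) ∈ Submodule.span R (Set.range (hodgeDualTwoForm b)) :=
    Submodule.subset_span ⟨1, rfl⟩
  have h2 : ι R (b 0) * ι R (b 1) ∈ Submodule.span R (Set.range (hodgeDualTwoForm b)) :=
    Submodule.subset_span ⟨2, rfl⟩
  fin_cases i <;> fin_cases j <;> simp [s10, s02, s21, h0, h1, h2]

theorem range_ι_sq_le_span_hodgeDualTwoForm :
    LinearMap.range (ι R : M →ₗ[R] ExteriorAlgebra R M) ^ 2 ≤
      Submodule.span R (Set.range (hodgeDualTwoForm b)) := by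
  rw [pow_two, Submodule.mul_le]
  rintro _ ⟨u, rfl⟩ _ ⟨v, rfl⟩
  rw [← b.sum_repr u, ← b.sum_repr v]
  simp only [map_sum, map_smul, Finset.sum_mul, Finset.mul_sum, smul_mul_smul_comm]
  exact Submodule.sum_mem _ fun i _ => Submodule.sum_mem _ fun j _ =>
    Submodule.smul_mem _ _ (ι_mul_ι_mem_span_hodgeDualTwoForm b j i)

theorem eq_zero_of_forall_ι_basis_mul_eq_zero {x : ExteriorAlgebra R M}
    (hx : x ∈ LinearMap.range (ι R : M →ₗ[R] ExteriorAlgebra R M) ^ 2)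
    (h : ∀ i, ι R (b i) * x = 0) : x = 0 := by
  obtain ⟨c, rfl⟩ :=
    (Submodule.mem_span_range_iff_exists_fun R).mp (range_ι_sq_le_span_hodgeDualTwoForm b hx)
  have hc : ∀ i, c i = 0 := fun i => by
    have hi := h i
    simp only [Finset.mul_sum, mul_smul_comm, ι_mul_hodgeDualTwoForm, smul_ite, smul_zero,
      Finset.sum_ite_eq, Finset.mem_univ, if_true] at hi
    exact (smul_ιMulti_basis_eq_zero_iff b).mp hi
  simp [hc]

end ExteriorAlgebra

/-- for 2-forms `B⁰,…,B³ ∈ Λ²V` over a 3-dimensional real vector space `V`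
with basis `(e¹,e²,e³)` and an arbitrary `e⁰ ∈ V`, the following are equivalent:
(a) `B^I = 0` for all `I`;
(b) `e^I∧B^J − e^J∧B^I = 0` for all `I,J ∈ {0,1,2,3}` and `e^i∧B^j + e^j∧B^i = 0`
for all spatial `i,j ∈ {1,2,3}`. -/
theorem stmt_0 (V : Type*) [AddCommGroup V] [Module ℝ V] (b : Module.Basis (Fin 3) ℝ V) (e0 : V)
    (B : Fin 4 → ExteriorAlgebra ℝ V)
    (hB : ∀ I : Fin 4, B I ∈
      (LinearMap.range (ExteriorAlgebra.ι ℝ : V →ₗ[ℝ] ExteriorAlgebra ℝ V) ^ 2 :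
        Submodule ℝ (ExteriorAlgebra ℝ V))) :
    (∀ I : Fin 4, B I = 0) ↔
      ((∀ I J : Fin 4,
          ExteriorAlgebra.ι ℝ ((Fin.cons e0 fun i => b i : Fin 4 → V) I) * B J -
            ExteriorAlgebra.ι ℝ ((Fin.cons e0 fun i => b i : Fin 4 → V) J) * B I = 0) ∧
        (∀ i j : Fin 3,
          ExteriorAlgebra.ι ℝ (b i) * B j.succ + ExteriorAlgebra.ι ℝ (b j) * B i.succ = 0)) := by
  refine ⟨fun h => ⟨fun I J => by simp [h], fun i j => by simp [h]⟩, fun ⟨hanti, hsym⟩ => ?_⟩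
  have hspatial (j : Fin 3) : B j.succ = 0 :=
    eq_zero_of_forall_ι_basis_mul_eq_zero b (hB j.succ) fun i =>
      eq_zero_of_sub_eq_zero_of_add_eq_zero (K := ℝ)
        (by simpa only [Fin.cons_succ] using hanti i.succ j.succ) (hsym i j)
  have htime : B 0 = 0 :=
    eq_zero_of_forall_ι_basis_mul_eq_zero b (hB 0) fun i => by
      simpa only [Fin.cons_succ, Fin.cons_zero, hspatial i, mul_zero, sub_zero]
        using hanti i.succ 0
  exact Fin.cases htime hspatial
end

section
/- Assume γ² ≠ ε and define [P^{−1}]^{IJKL} := (γ/(2(ε−γ²)))·(−εγ·ε^{IJKL} + η^{IK}η^{JL} − η^{JK}η^{IL}). Then for all I, J, M, N ∈ {0,1,2,3}: Σ_{K,L} P_{IJKL}·[P^{−1}]^{KLMN} = (1/2)(δ_I^M δ_J^N − δ_I^N δ_J^M). -/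
noncomputable section

/-- 4-index Levi-Civita symbol on `Fin 4`, normalized so that `ε₀₁₂₃ = 1`. -/
def lc4 (I J K L : Fin 4) : ℝ :=
  ((J.val : ℝ) - (I.val : ℝ)) * ((K.val : ℝ) - (I.val : ℝ)) * ((L.val : ℝ) - (I.val : ℝ)) *
    ((K.val : ℝ) - (J.val : ℝ)) * ((L.val : ℝ) - (J.val : ℝ)) * ((L.val : ℝ) - (K.val : ℝ)) / 12

/-- Internal metric `η = diag(ε,1,1,1) = η⁻¹`. -/
def etaM (ep : ℝ) (I J : Fin 4) : ℝ := if I = J then (if I = 0 then ep else 1) else 0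

/-- Kronecker delta `δ_I^J`. -/
def kd (I J : Fin 4) : ℝ := if I = J then 1 else 0

/-- The tensor `P_{IJKL} = (1/2)(ε_{IJKL} + (ε/γ)(η_{IK}η_{JL} − η_{JK}η_{IL}))`. -/
def Pt (ep γ : ℝ) (I J K L : Fin 4) : ℝ :=
  (1 / 2) * (lc4 I J K L + (ep / γ) * (etaM ep I K * etaM ep J L - etaM ep J K * etaM ep I L))

/-- `[P⁻¹]^{IJKL} := (γ/(2(ε−γ²)))·(−εγ·ε^{IJKL} + η^{IK}η^{JL} − η^{JK}η^{IL})`,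
where `ε^{IJKL} = ε·ε_{IJKL}` and `η^{IJ} = η_{IJ}`. -/
def Pinv (ep γ : ℝ) (I J K L : Fin 4) : ℝ :=
  (γ / (2 * (ep - γ ^ 2))) *
    (-(ep * γ) * (ep * lc4 I J K L) + etaM ep I K * etaM ep J L - etaM ep J K * etaM ep I L)

/-! ### Auxiliary integer versions and contraction identities -/

def lc4z (I J K L : Fin 4) : ℤ :=
  ((J.val:ℤ) - I.val) * ((K.val:ℤ) - I.val) * ((L.val:ℤ) - I.val) *
    ((K.val:ℤ) - J.val) * ((L.val:ℤ) - J.val) * ((L.val:ℤ) - K.val) / 12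

def etaz (e : ℤ) (I J : Fin 4) : ℤ := if I = J then (if I = 0 then e else 1) else 0

def kdz (I J : Fin 4) : ℤ := if I = J then 1 else 0

def Aqz (e : ℤ) (I J K L : Fin 4) : ℤ :=
  etaz e I K * etaz e J L - etaz e J K * etaz e I L

lemma lc4z_mul_12 : ∀ I J K L : Fin 4, lc4z I J K L * 12 =
    ((J.val:ℤ) - I.val) * ((K.val:ℤ) - I.val) * ((L.val:ℤ) - I.val) *
    ((K.val:ℤ) - J.val) * ((L.val:ℤ) - J.val) * ((L.val:ℤ) - K.val) := by decide

lemma lc4_eq (I J K L : Fin 4) : lc4 I J K L = (lc4z I J K L : ℝ) := by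
  have h := lc4z_mul_12 I J K L
  have h' : ((lc4z I J K L : ℝ)) * 12 =
      ((J.val:ℝ) - I.val) * ((K.val:ℝ) - I.val) * ((L.val:ℝ) - I.val) *
      ((K.val:ℝ) - J.val) * ((L.val:ℝ) - J.val) * ((L.val:ℝ) - K.val) := by
    exact_mod_cast congrArg (fun z : ℤ => (z : ℝ)) h
  unfold lc4
  linarith [h']

lemma etaM_eq (e : ℤ) (I J : Fin 4) : etaM (e : ℝ) I J = ((etaz e I J : ℤ) : ℝ) := by
  unfold etaM etaz
  split_ifs <;> norm_num

lemma kd_eq (I J : Fin 4) : kd I J = ((kdz I J : ℤ) : ℝ) := by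
  unfold kd kdz; split_ifs <;> norm_num

lemma contr1 : ∀ I J M N : Fin 4,
    ∑ K : Fin 4, ∑ L : Fin 4, lc4z I J K L * lc4z K L M N =
      2 * (kdz I M * kdz J N - kdz I N * kdz J M) := by decide

lemma contr2 (e : ℤ) (he : e = 1 ∨ e = -1) : ∀ I J M N : Fin 4,
    ∑ K : Fin 4, ∑ L : Fin 4, lc4z I J K L * Aqz e K L M N =
      e * ∑ K : Fin 4, ∑ L : Fin 4, Aqz e I J K L * lc4z K L M N := by
  rcases he with h | h <;> subst h <;> decide

lemma contr3 (e : ℤ) (he : e = 1 ∨ e = -1) : ∀ I J M N : Fin 4,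
    ∑ K : Fin 4, ∑ L : Fin 4, Aqz e I J K L * Aqz e K L M N =
      2 * (kdz I M * kdz J N - kdz I N * kdz J M) := by
  rcases he with h | h <;> subst h <;> decide

lemma main_aux (e : ℤ) (he : e = 1 ∨ e = -1) (γ : ℝ) (hγ : γ ≠ 0)
    (hγ2 : γ ^ 2 ≠ (e : ℝ)) (I J M N : Fin 4) :
    ∑ K : Fin 4, ∑ L : Fin 4, Pt (e : ℝ) γ I J K L * Pinv (e : ℝ) γ K L M N =
      (1 / 2) * (kd I M * kd J N - kd I N * kd J M) := by
  have h1 : (e : ℝ) - γ ^ 2 ≠ 0 := fun h => hγ2 (by linarith)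
  obtain ⟨c1, hc1⟩ : ∃ c : ℝ, c = (1/2) * (γ / (2 * ((e:ℝ) - γ ^ 2))) * (-((e:ℝ) * γ) * (e:ℝ)) := ⟨_, rfl⟩
  obtain ⟨c2, hc2⟩ : ∃ c : ℝ, c = (1/2) * (γ / (2 * ((e:ℝ) - γ ^ 2))) := ⟨_, rfl⟩
  obtain ⟨c3, hc3⟩ : ∃ c : ℝ, c = ((e:ℝ) / (2 * γ)) * (γ / (2 * ((e:ℝ) - γ ^ 2))) * (-((e:ℝ) * γ) * (e:ℝ)) := ⟨_, rfl⟩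
  obtain ⟨c4, hc4⟩ : ∃ c : ℝ, c = ((e:ℝ) / (2 * γ)) * (γ / (2 * ((e:ℝ) - γ ^ 2))) := ⟨_, rfl⟩
  have expand : ∀ K L : Fin 4, Pt (e : ℝ) γ I J K L * Pinv (e : ℝ) γ K L M N =
      c1 * ((lc4z I J K L : ℝ) * (lc4z K L M N : ℝ)) +
      c2 * ((lc4z I J K L : ℝ) * (Aqz e K L M N : ℝ)) +
      c3 * ((Aqz e I J K L : ℝ) * (lc4z K L M N : ℝ)) +
      c4 * ((Aqz e I J K L : ℝ) * (Aqz e K L M N : ℝ)) := by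
    intro K L
    simp only [Pt, Pinv, lc4_eq, etaM_eq, Aqz, hc1, hc2, hc3, hc4]
    push_cast
    ring
  have hsum : ∑ K : Fin 4, ∑ L : Fin 4, Pt (e : ℝ) γ I J K L * Pinv (e : ℝ) γ K L M N =
      c1 * (∑ K : Fin 4, ∑ L : Fin 4, (lc4z I J K L : ℝ) * (lc4z K L M N : ℝ)) +
      c2 * (∑ K : Fin 4, ∑ L : Fin 4, (lc4z I J K L : ℝ) * (Aqz e K L M N : ℝ)) +
      c3 * (∑ K : Fin 4, ∑ L : Fin 4, (Aqz e I J K L : ℝ) * (lc4z K L M N : ℝ)) +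
      c4 * (∑ K : Fin 4, ∑ L : Fin 4, (Aqz e I J K L : ℝ) * (Aqz e K L M N : ℝ)) := by
    simp only [Finset.mul_sum]
    rw [← Finset.sum_add_distrib, ← Finset.sum_add_distrib, ← Finset.sum_add_distrib]
    refine Finset.sum_congr rfl fun K _ => ?_
    rw [← Finset.sum_add_distrib, ← Finset.sum_add_distrib, ← Finset.sum_add_distrib]
    exact Finset.sum_congr rfl fun L _ => expand K L
  have S1 : ∑ K : Fin 4, ∑ L : Fin 4, (lc4z I J K L : ℝ) * (lc4z K L M N : ℝ) =
      2 * ((kdz I M : ℝ) * (kdz J N : ℝ) - (kdz I N : ℝ) * (kdz J M : ℝ)) := by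
    exact_mod_cast congrArg (fun z : ℤ => (z : ℝ)) (contr1 I J M N)
  have S2 : ∑ K : Fin 4, ∑ L : Fin 4, (lc4z I J K L : ℝ) * (Aqz e K L M N : ℝ) =
      (e : ℝ) * ∑ K : Fin 4, ∑ L : Fin 4, (Aqz e I J K L : ℝ) * (lc4z K L M N : ℝ) := by
    exact_mod_cast congrArg (fun z : ℤ => (z : ℝ)) (contr2 e he I J M N)
  have S4 : ∑ K : Fin 4, ∑ L : Fin 4, (Aqz e I J K L : ℝ) * (Aqz e K L M N : ℝ) =
      2 * ((kdz I M : ℝ) * (kdz J N : ℝ) - (kdz I N : ℝ) * (kdz J M : ℝ)) := by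
    exact_mod_cast congrArg (fun z : ℤ => (z : ℝ)) (contr3 e he I J M N)
  rw [hsum, S1, S2, S4, kd_eq, kd_eq, kd_eq, kd_eq]
  have he2 : (e : ℝ) ^ 2 = 1 := by rcases he with h | h <;> subst h <;> norm_num
  have hcc : c2 * (e : ℝ) + c3 = 0 := by
    rw [hc2, hc3]
    rcases he with h | h <;> subst h <;> push_cast <;> push_cast at h1 <;> field_simp <;> ring
  have hc14 : c1 * 2 + c4 * 2 = 1 / 2 := by
    rw [hc1, hc4]
    rcases he with h | h <;> subst h <;> push_cast <;> push_cast at h1 <;> field_simp <;> ring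
  set S := ∑ K : Fin 4, ∑ L : Fin 4, (Aqz e I J K L : ℝ) * (lc4z K L M N : ℝ)
  set Δ := (kdz I M : ℝ) * (kdz J N : ℝ) - (kdz I N : ℝ) * (kdz J M : ℝ)
  calc c1 * (2 * Δ) + c2 * ((e : ℝ) * S) + c3 * S + c4 * (2 * Δ)
      = (c1 * 2 + c4 * 2) * Δ + (c2 * (e : ℝ) + c3) * S := by ring
    _ = (1 / 2) * Δ := by rw [hcc, hc14]; ring
    _ = (1 / 2) * (↑(kdz I M) * ↑(kdz J N) - ↑(kdz I N) * ↑(kdz J M)) := rfl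

/-- `Σ_{K,L} P_{IJKL}·[P⁻¹]^{KLMN} = (1/2)(δ_I^M δ_J^N − δ_I^N δ_J^M)`. -/
theorem stmt_1 (ep γ : ℝ) (hep : ep = 1 ∨ ep = -1) (hγ : γ ≠ 0) (hγ2 : γ ^ 2 ≠ ep)
    (I J M N : Fin 4) :
    ∑ K : Fin 4, ∑ L : Fin 4, Pt ep γ I J K L * Pinv ep γ K L M N =
      (1 / 2) * (kd I M * kd J N - kd I N * kd J M) := by
  rcases hep with h | h
  · have := main_aux 1 (Or.inl rfl) γ hγ (by rw [h] at hγ2; exact_mod_cast hγ2) I J M N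
    simpa [h] using this
  · have := main_aux (-1) (Or.inr rfl) γ hγ (by rw [h] at hγ2; exact_mod_cast hγ2) I J M N
    simpa [h] using this

end
end

section
/- Let e⁰, e¹, e², e³ ∈ V with (e¹,e²,e³) a basis of V, and let F^{KL} ∈ Λ²V for K, L ∈ {0,1,2,3} with F^{KL} = −F^{LK}. If Σ_{J,K} η_{JK}·F^{IK}∧e^J = 0 in Λ³V for every I (i.e. F^I{}_J∧e^J = 0), then for every I: Σ_{J,K,L} P_{IJKL}·e^J∧F^{KL} = (1/2)·Σ_{J,K,L} ε_{IJKL}·e^J∧F^{KL}. In other words, when the algebraic Bianchi-type identity F^I{}_J∧e^J = 0 holds, the γ-dependent part of P drops out of the constraint P_{IJKL}e^J∧F^{KL}, which therefore coincides with the Immirzi-parameter-independent expression (1/2)ε_{IJKL}e^J∧F^{KL}. -/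
/-!
Split `P = ½ε + (ε/2γ)(η_{IK}η_{JL} − η_{JK}η_{IL})`. By antisymmetry of `F` the γ-part
`(η_{IK}η_{JL} − η_{JK}η_{IL}) e^J∧F^{KL}` is `2 η_{IK} e^J∧F^K{}_J`, and since a vector commutes
with a 2-form this is `2 η_{IK} F^K{}_J∧e^J`, which vanishes by the Bianchi identity.
-/

open ExteriorAlgebra

noncomputable section

theorem ExteriorAlgebra.commute_ι_of_mem_range_pow_two {R M : Type*} [CommRing R]
    [AddCommGroup M] [Module R M] {x : ExteriorAlgebra R M}
    (hx : x ∈ LinearMap.range (ι R : M →ₗ[R] ExteriorAlgebra R M) ^ 2) (v : M) :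
    Commute (ι R v) x := by
  have anticomm : ∀ w : M, ι R v * ι R w = -(ι R w * ι R v) :=
    fun w => eq_neg_of_add_eq_zero_left (ι_add_mul_swap v w)
  rw [pow_two] at hx
  refine Submodule.mul_induction_on hx ?_ fun _ _ => Commute.add_right
  rintro _ ⟨a, rfl⟩ _ ⟨c, rfl⟩
  change ι R v * (ι R a * ι R c) = ι R a * ι R c * ι R v
  rw [← mul_assoc, anticomm, neg_mul, mul_assoc, anticomm, mul_neg, neg_neg, mul_assoc]

theorem sum_metric_sub_smul_eq {κ R M : Type*} [Fintype κ] [CommRing R] [AddCommGroup M]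
    [Module R M] (η : κ → κ → R) (T : κ → κ → κ → M) (hT : ∀ J K L, T J K L = -T J L K)
    (I : κ) :
    ∑ J, ∑ K, ∑ L, (η I K * η J L - η J K * η I L) • T J K L =
      (2 : R) • ∑ K, η I K • ∑ J, ∑ L, η J L • T J K L := by
  have first_term : ∑ J, ∑ K, ∑ L, (η I K * η J L) • T J K L =
      ∑ K, η I K • ∑ J, ∑ L, η J L • T J K L := by
    simp only [Finset.smul_sum, mul_smul]
    exact Finset.sum_comm
  have second_term : ∑ J, ∑ K, ∑ L, (η J K * η I L) • T J K L =
      -∑ K, η I K • ∑ J, ∑ L, η J L • T J K L := by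
    calc ∑ J, ∑ K, ∑ L, (η J K * η I L) • T J K L
        = ∑ L, ∑ J, ∑ K, (η J K * η I L) • T J K L :=
          (Finset.sum_congr rfl fun _ _ => Finset.sum_comm).trans Finset.sum_comm
      _ = -∑ K, η I K • ∑ J, ∑ L, η J L • T J K L := by
          simp only [Finset.smul_sum, ← Finset.sum_neg_distrib, ← smul_neg, ← hT,
            mul_comm (η _ _) (η I _), mul_smul]
  simp only [sub_smul, Finset.sum_sub_distrib, first_term, second_term, sub_neg_eq_add, two_smul]

theorem Pt_eq_half_lc4_add (ep γ : ℝ) (I J K L : Fin 4) :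
    Pt ep γ I J K L = 1 / 2 * lc4 I J K L +
      ep / (2 * γ) * (etaM ep I K * etaM ep J L - etaM ep J K * etaM ep I L) := by
  rw [Pt]
  ring

theorem stmt_17_general (V : Type*) [AddCommGroup V] [Module ℝ V] (b : Module.Basis (Fin 3) ℝ V) (e0 : V)
    (ep γ : ℝ)
    (F : Fin 4 → Fin 4 → ExteriorAlgebra ℝ V)
    (hF2 : ∀ K L : Fin 4, F K L ∈
      (LinearMap.range (ExteriorAlgebra.ι ℝ : V →ₗ[ℝ] ExteriorAlgebra ℝ V) ^ 2 :
        Submodule ℝ (ExteriorAlgebra ℝ V)))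
    (hFa : ∀ K L : Fin 4, F K L = -F L K)
    (hBianchi : ∀ I : Fin 4, ∑ J : Fin 4, ∑ K : Fin 4,
      etaM ep J K •
        (F I K * ExteriorAlgebra.ι ℝ ((Fin.cons e0 fun i => b i : Fin 4 → V) J)) = 0) :
    ∀ I : Fin 4,
      ∑ J : Fin 4, ∑ K : Fin 4, ∑ L : Fin 4,
          Pt ep γ I J K L •
            (ExteriorAlgebra.ι ℝ ((Fin.cons e0 fun i => b i : Fin 4 → V) J) * F K L) =
        ∑ J : Fin 4, ∑ K : Fin 4, ∑ L : Fin 4,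
          ((1 / 2) * lc4 I J K L) •
            (ExteriorAlgebra.ι ℝ ((Fin.cons e0 fun i => b i : Fin 4 → V) J) * F K L) := by
  intro I
  set e : Fin 4 → V := Fin.cons e0 fun i => b i
  have hcomm : ∀ v K L, ι ℝ v * F K L = F K L * ι ℝ v := fun v K L =>
    (commute_ι_of_mem_range_pow_two (hF2 K L) v).eq
  have γ_part_eq_zero : ∑ J, ∑ K, ∑ L,
      (etaM ep I K * etaM ep J L - etaM ep J K * etaM ep I L) • (ι ℝ (e J) * F K L) = 0 := by
    rw [sum_metric_sub_smul_eq (etaM ep) _ (fun J K L => by rw [hFa, mul_neg]) I]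
    simp only [hcomm, hBianchi, smul_zero, Finset.sum_const_zero]
  simp only [Pt_eq_half_lc4_add, add_smul, Finset.sum_add_distrib, mul_smul (ep / (2 * γ)),
    ← Finset.smul_sum, γ_part_eq_zero, smul_zero, add_zero]

/-- if the 2-forms `F^{KL} = −F^{LK} ∈ Λ²V` satisfy
`F^I{}_J∧e^J = 0` (i.e. `Σ_{J,K} η_{JK}·F^{IK}∧e^J = 0`) then for every `I`
`Σ_{J,K,L} P_{IJKL}·e^J∧F^{KL} = (1/2)·Σ_{J,K,L} ε_{IJKL}·e^J∧F^{KL}`: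
the γ-dependent part of `P` drops out of the constraint. -/
theorem stmt_17 (V : Type*) [AddCommGroup V] [Module ℝ V] (b : Module.Basis (Fin 3) ℝ V) (e0 : V)
    (ep γ : ℝ) (hep : ep = 1 ∨ ep = -1) (hγ : γ ≠ 0)
    (F : Fin 4 → Fin 4 → ExteriorAlgebra ℝ V)
    (hF2 : ∀ K L : Fin 4, F K L ∈
      (LinearMap.range (ExteriorAlgebra.ι ℝ : V →ₗ[ℝ] ExteriorAlgebra ℝ V) ^ 2 :
        Submodule ℝ (ExteriorAlgebra ℝ V)))
    (hFa : ∀ K L : Fin 4, F K L = -F L K)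
    (hBianchi : ∀ I : Fin 4, ∑ J : Fin 4, ∑ K : Fin 4,
      etaM ep J K •
        (F I K * ExteriorAlgebra.ι ℝ ((Fin.cons e0 fun i => b i : Fin 4 → V) J)) = 0) :
    ∀ I : Fin 4,
      ∑ J : Fin 4, ∑ K : Fin 4, ∑ L : Fin 4,
          Pt ep γ I J K L •
            (ExteriorAlgebra.ι ℝ ((Fin.cons e0 fun i => b i : Fin 4 → V) J) * F K L) =
        ∑ J : Fin 4, ∑ K : Fin 4, ∑ L : Fin 4,
          ((1 / 2) * lc4 I J K L) •
            (ExteriorAlgebra.ι ℝ ((Fin.cons e0 fun i => b i : Fin 4 → V) J) * F K L) :=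
  stmt_17_general V b e0 ep γ F hF2 hFa hBianchi

end
end
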